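/- arXiv:2507.07433 — 2 statements merged into one kernel-verified Lean document; each statement's English description precedes it below -/
import Mathlib

section
/- Let $(X_1,\ldots,X_d) \sim GD(\alpha_1,\ldots,\alpha_d;\beta_1,\ldots,\beta_d)$, defined by $X_i = V_i \prod_{k<i}(1-V_k)$ with independent $V_i \sim \mathrm{Beta}(\alpha_i,\beta_i)$, and let $M_{i-1} = \prod_{k=1}^{i-1} \frac{\beta_k+1}{\alpha_k+\beta_k+1}$. Then for $i < j$, $\mathrm{Cov}(X_i, X_j) = E(X_j)\left[\frac{\alpha_i}{\alpha_i + \beta_i + 1} M_{i-1} - E(X_i)\right]$. -/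
open MeasureTheory ProbabilityTheory Finset

/-- The Beta(a,b) measure on ℝ, with density `x^(a-1) (1-x)^(b-1) / B(a,b)` on `(0,1)`. -/
noncomputable def betaMeasureGD (a b : ℝ) : Measure ℝ :=
  volume.withDensity fun x => ENNReal.ofReal
    ((Set.Ioo (0 : ℝ) 1).indicator
      (fun x => Real.Gamma (a + b) / (Real.Gamma a * Real.Gamma b) *
        x ^ (a - 1) * (1 - x) ^ (b - 1)) x)

open scoped ENNReal NNReal

lemma real_betaIntegrand_eq {c d : ℝ} {x : ℝ} (hx : x ∈ Set.Ioo (0:ℝ) 1) :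
    ((x ^ (c-1) * (1-x) ^ (d-1) : ℝ) : ℂ) = (x : ℂ) ^ ((c:ℂ) - 1) * (1 - (x:ℂ)) ^ ((d:ℂ) - 1) := by
  rw [Complex.ofReal_mul, Complex.ofReal_cpow hx.1.le, Complex.ofReal_cpow (by linarith [hx.2])]
  push_cast
  ring_nf

lemma real_betaIntegral {c d : ℝ} (hc : 0 < c) (hd : 0 < d) :
    IntegrableOn (fun x : ℝ => x ^ (c-1) * (1-x) ^ (d-1)) (Set.Ioo 0 1) volume ∧
    ∫ x in Set.Ioo (0:ℝ) 1, x ^ (c-1) * (1-x) ^ (d-1) =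
      Real.Gamma c * Real.Gamma d / Real.Gamma (c+d) := by
  have hc' : 0 < (c:ℂ).re := by simpa using hc
  have hd' : 0 < (d:ℂ).re := by simpa using hd
  have hconv := Complex.betaIntegral_convergent hc' hd'
  have hIoc : IntegrableOn (fun x : ℝ => (x : ℂ) ^ ((c:ℂ) - 1) * (1 - (x:ℂ)) ^ ((d:ℂ) - 1))
      (Set.Ioc 0 1) volume := hconv.1
  have hmem : ∀ᵐ x ∂(volume.restrict (Set.Ioc (0:ℝ) 1)), x ∈ Set.Ioo (0:ℝ) 1 := by
    have h1 : ∀ᵐ x ∂(volume.restrict (Set.Ioc (0:ℝ) 1)), x ≠ 1 :=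
      ae_restrict_of_ae (ae_iff.2 (by simpa using measure_singleton (1:ℝ)))
    filter_upwards [h1, ae_restrict_mem measurableSet_Ioc] with x hx1 hx
    exact ⟨hx.1, lt_of_le_of_ne hx.2 hx1⟩
  have hae : (fun x : ℝ => ((x : ℂ) ^ ((c:ℂ) - 1) * (1 - (x:ℂ)) ^ ((d:ℂ) - 1)).re)
      =ᵐ[volume.restrict (Set.Ioc (0:ℝ) 1)] (fun x : ℝ => x ^ (c-1) * (1-x) ^ (d-1)) := by
    filter_upwards [hmem] with x hx
    rw [← real_betaIntegrand_eq hx, Complex.ofReal_re]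
  have hIocR : IntegrableOn (fun x : ℝ => x ^ (c-1) * (1-x) ^ (d-1)) (Set.Ioc 0 1) volume :=
    (hIoc.re).congr hae
  refine ⟨hIocR.mono_set Set.Ioo_subset_Ioc_self, ?_⟩
  have hne : Complex.Gamma ((c:ℂ) + d) ≠ 0 := by
    rw [← Complex.ofReal_add, Complex.Gamma_ofReal]
    exact_mod_cast (Real.Gamma_pos_of_pos (by linarith : (0:ℝ) < c + d)).ne'
  have hval : Complex.betaIntegral c d =
      ((Real.Gamma c * Real.Gamma d / Real.Gamma (c+d) : ℝ) : ℂ) := by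
    have hb : Complex.betaIntegral c d =
        Complex.Gamma c * Complex.Gamma d / Complex.Gamma ((c:ℂ) + d) := by
      rw [eq_div_iff hne, mul_comm]
      exact (Complex.Gamma_mul_Gamma_eq_betaIntegral hc' hd').symm
    rw [hb, ← Complex.ofReal_add, Complex.Gamma_ofReal, Complex.Gamma_ofReal,
      Complex.Gamma_ofReal]
    push_cast
    ring
  have hbeta : Complex.betaIntegral c d =
      ∫ x in Set.Ioc (0:ℝ) 1, (x : ℂ) ^ ((c:ℂ) - 1) * (1 - (x:ℂ)) ^ ((d:ℂ) - 1) := by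
    rw [Complex.betaIntegral, intervalIntegral.intervalIntegral_eq_integral_uIoc]
    simp [Set.uIoc_of_le (by norm_num : (0:ℝ) ≤ 1)]
  calc ∫ x in Set.Ioo (0:ℝ) 1, x ^ (c-1) * (1-x) ^ (d-1)
      = ∫ x in Set.Ioc (0:ℝ) 1, x ^ (c-1) * (1-x) ^ (d-1) := by
        exact setIntegral_congr_set Ioo_ae_eq_Ioc
    _ = ∫ x in Set.Ioc (0:ℝ) 1, ((x : ℂ) ^ ((c:ℂ) - 1) * (1 - (x:ℂ)) ^ ((d:ℂ) - 1)).re :=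
        (integral_congr_ae hae).symm
    _ = (∫ x in Set.Ioc (0:ℝ) 1, (x : ℂ) ^ ((c:ℂ) - 1) * (1 - (x:ℂ)) ^ ((d:ℂ) - 1)).re := by
        simpa using (integral_re hIoc)
    _ = Real.Gamma c * Real.Gamma d / Real.Gamma (c+d) := by
        rw [← hbeta, hval, Complex.ofReal_re]

lemma betaMeasure_moment (a b p q : ℝ) (ha : 0 < a) (hb : 0 < b) (hp : 0 ≤ p) (hq : 0 ≤ q) :
    Integrable (fun x => x ^ p * (1-x) ^ q) (betaMeasureGD a b) ∧
    ∫ x, x ^ p * (1-x) ^ q ∂(betaMeasureGD a b) =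
      Real.Gamma (a+b) / (Real.Gamma a * Real.Gamma b) *
        (Real.Gamma (a+p) * Real.Gamma (b+q) / Real.Gamma (a+p+(b+q))) := by
  set C := Real.Gamma (a + b) / (Real.Gamma a * Real.Gamma b) with hC
  set h : ℝ → ℝ := (Set.Ioo (0 : ℝ) 1).indicator
      (fun x => C * x ^ (a - 1) * (1 - x) ^ (b - 1)) with hh
  have hCpos : 0 < C := by
    apply div_pos (Real.Gamma_pos_of_pos (by linarith))
    exact mul_pos (Real.Gamma_pos_of_pos ha) (Real.Gamma_pos_of_pos hb)
  have hnn : ∀ x, 0 ≤ h x := by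
    intro x
    apply Set.indicator_nonneg
    intro y hy
    have h2 : (0:ℝ) ≤ 1 - y := by linarith [hy.2.le]
    exact mul_nonneg (mul_nonneg hCpos.le (Real.rpow_nonneg hy.1.le _)) (Real.rpow_nonneg h2 _)
  have hmeas : Measurable h := by
    rw [hh, ← Set.piecewise_eq_indicator]
    apply ContinuousOn.measurable_piecewise _ continuous_zero.continuousOn measurableSet_Ioo
    apply ContinuousOn.mul
    apply ContinuousOn.mul continuousOn_const
    · exact ContinuousOn.rpow_const continuousOn_id (fun x hx => Or.inl (ne_of_gt hx.1))
    · exact ContinuousOn.rpow_const (continuousOn_const.sub continuousOn_id)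
        (fun x hx => Or.inl (sub_ne_zero.2 (ne_of_gt hx.2)))
  have hmeasN : Measurable fun x => (h x).toNNReal := hmeas.real_toNNReal
  have hd : betaMeasureGD a b = volume.withDensity fun x => ((h x).toNNReal : ℝ≥0∞) := rfl
  -- the base integral
  have hbase := real_betaIntegral (c := a + p) (d := b + q)
    (by linarith) (by linarith)
  have heq : Set.EqOn (fun x : ℝ => x ^ p * (1-x) ^ q * h x)
      (fun x : ℝ => C * (x ^ (a+p-1) * (1-x) ^ (b+q-1))) (Set.Ioo 0 1) := by
    intro x hx
    have hx1 : (0:ℝ) < x := hx.1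
    have hx2 : (0:ℝ) < 1 - x := by linarith [hx.2]
    simp only [hh, Set.indicator_of_mem hx]
    rw [show a + p - 1 = p + (a - 1) by ring, show b + q - 1 = q + (b - 1) by ring,
      Real.rpow_add hx1, Real.rpow_add hx2]
    ring
  have hind : (fun x : ℝ => x ^ p * (1-x) ^ q * h x) =
      (Set.Ioo (0:ℝ) 1).indicator (fun x : ℝ => x ^ p * (1-x) ^ q * h x) := by
    funext x
    by_cases hx : x ∈ Set.Ioo (0:ℝ) 1
    · rw [Set.indicator_of_mem hx]
    · rw [Set.indicator_of_notMem hx, hh, Set.indicator_of_notMem hx, mul_zero]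
  have hintOn : IntegrableOn (fun x : ℝ => x ^ p * (1-x) ^ q * h x) (Set.Ioo 0 1) volume := by
    have hcm : IntegrableOn (fun x : ℝ => C * (x ^ (a+p-1) * (1-x) ^ (b+q-1)))
        (Set.Ioo 0 1) volume := hbase.1.const_mul C
    exact hcm.congr_fun (fun x hx => (heq hx).symm) measurableSet_Ioo
  have hint : Integrable (fun x : ℝ => x ^ p * (1-x) ^ q * h x) volume := by
    rw [hind]
    exact (integrable_indicator_iff measurableSet_Ioo).2 hintOn
  constructor
  · rw [hd]
    rw [integrable_withDensity_iff (hmeasN.coe_nnreal_ennreal)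
      (Filter.Eventually.of_forall fun x => ENNReal.coe_lt_top)]
    have : (fun x : ℝ => x ^ p * (1-x) ^ q * (((h x).toNNReal : ℝ≥0∞)).toReal) =
        (fun x : ℝ => x ^ p * (1-x) ^ q * h x) := by
      funext x
      simp [Real.coe_toNNReal _ (hnn x)]
    rw [this]
    exact hint
  · rw [hd, integral_withDensity_eq_integral_smul hmeasN]
    have : (fun x : ℝ => (h x).toNNReal • (x ^ p * (1-x) ^ q)) =
        (fun x : ℝ => x ^ p * (1-x) ^ q * h x) := by
      funext x
      simp [NNReal.smul_def, Real.coe_toNNReal _ (hnn x), mul_comm]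
    rw [this, hind, integral_indicator measurableSet_Ioo,
      setIntegral_congr_fun measurableSet_Ioo heq, integral_const_mul,
      show a+p-1 = (a+p)-1 by ring, show b+q-1 = (b+q)-1 by ring, hbase.2]

lemma betaMoment_id (a b : ℝ) (ha : 0 < a) (hb : 0 < b) :
    Integrable (fun x : ℝ => x) (betaMeasureGD a b) ∧
    ∫ x, x ∂(betaMeasureGD a b) = a / (a + b) := by
  have h := betaMeasure_moment a b 1 0 ha hb zero_le_one le_rfl
  have hfe : (fun x : ℝ => x ^ (1:ℝ) * (1-x) ^ (0:ℝ)) = fun x : ℝ => x := by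
    funext x; rw [Real.rpow_one, Real.rpow_zero, mul_one]
  rw [hfe] at h
  refine ⟨h.1, ?_⟩
  rw [h.2, add_zero, show a + 1 + b = (a + b) + 1 by ring,
    Real.Gamma_add_one ha.ne', Real.Gamma_add_one (by positivity : (a+b) ≠ 0)]
  have g1 := (Real.Gamma_pos_of_pos ha).ne'
  have g2 := (Real.Gamma_pos_of_pos hb).ne'
  have g3 := (Real.Gamma_pos_of_pos (by linarith : (0:ℝ) < a + b)).ne'
  field_simp

lemma betaMoment_one_sub (a b : ℝ) (ha : 0 < a) (hb : 0 < b) :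
    Integrable (fun x : ℝ => 1 - x) (betaMeasureGD a b) ∧
    ∫ x, (1 - x) ∂(betaMeasureGD a b) = b / (a + b) := by
  have h := betaMeasure_moment a b 0 1 ha hb le_rfl zero_le_one
  have hfe : (fun x : ℝ => x ^ (0:ℝ) * (1-x) ^ (1:ℝ)) = fun x : ℝ => 1 - x := by
    funext x; rw [Real.rpow_one, Real.rpow_zero, one_mul]
  rw [hfe] at h
  refine ⟨h.1, ?_⟩
  rw [h.2, add_zero, show a + (b + 1) = (a + b) + 1 by ring,
    Real.Gamma_add_one hb.ne', Real.Gamma_add_one (by positivity : (a+b) ≠ 0)]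
  have g1 := (Real.Gamma_pos_of_pos ha).ne'
  have g2 := (Real.Gamma_pos_of_pos hb).ne'
  have g3 := (Real.Gamma_pos_of_pos (by linarith : (0:ℝ) < a + b)).ne'
  field_simp

lemma betaMoment_mul (a b : ℝ) (ha : 0 < a) (hb : 0 < b) :
    Integrable (fun x : ℝ => x * (1 - x)) (betaMeasureGD a b) ∧
    ∫ x, x * (1 - x) ∂(betaMeasureGD a b) = a * b / ((a + b) * (a + b + 1)) := by
  have h := betaMeasure_moment a b 1 1 ha hb zero_le_one zero_le_one
  have hfe : (fun x : ℝ => x ^ (1:ℝ) * (1-x) ^ (1:ℝ)) = fun x : ℝ => x * (1 - x) := by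
    funext x; rw [Real.rpow_one, Real.rpow_one]
  rw [hfe] at h
  refine ⟨h.1, ?_⟩
  rw [h.2, show a + 1 + (b + 1) = ((a + b) + 1) + 1 by ring,
    Real.Gamma_add_one ha.ne', Real.Gamma_add_one hb.ne',
    Real.Gamma_add_one (by positivity : (a+b+1) ≠ 0),
    Real.Gamma_add_one (by positivity : (a+b) ≠ 0)]
  have g1 := (Real.Gamma_pos_of_pos ha).ne'
  have g2 := (Real.Gamma_pos_of_pos hb).ne'
  have g3 := (Real.Gamma_pos_of_pos (by linarith : (0:ℝ) < a + b)).ne'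
  have h4 : a + b + 1 ≠ 0 := by positivity
  field_simp

lemma betaMoment_one_sub_sq (a b : ℝ) (ha : 0 < a) (hb : 0 < b) :
    Integrable (fun x : ℝ => (1 - x) * (1 - x)) (betaMeasureGD a b) ∧
    ∫ x, (1 - x) * (1 - x) ∂(betaMeasureGD a b) = b * (b + 1) / ((a + b) * (a + b + 1)) := by
  have h := betaMeasure_moment a b 0 2 ha hb le_rfl (by norm_num)
  have hfe : (fun x : ℝ => x ^ (0:ℝ) * (1-x) ^ (2:ℝ)) = fun x : ℝ => (1 - x) * (1 - x) := by
    funext x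
    rw [Real.rpow_zero, one_mul, show (2:ℝ) = ((2:ℕ):ℝ) by norm_num, Real.rpow_natCast]
    ring
  rw [hfe] at h
  refine ⟨h.1, ?_⟩
  rw [h.2, add_zero, show b + 2 = (b + 1) + 1 by ring,
    show a + (b + 1 + 1) = ((a + b) + 1) + 1 by ring,
    Real.Gamma_add_one (by positivity : (b+1) ≠ 0), Real.Gamma_add_one hb.ne',
    Real.Gamma_add_one (by positivity : (a+b+1) ≠ 0),
    Real.Gamma_add_one (by positivity : (a+b) ≠ 0)]
  have g1 := (Real.Gamma_pos_of_pos ha).ne'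
  have g2 := (Real.Gamma_pos_of_pos hb).ne'
  have g3 := (Real.Gamma_pos_of_pos (by linarith : (0:ℝ) < a + b)).ne'
  have h4 : a + b + 1 ≠ 0 := by positivity
  field_simp

lemma iIndep_integral_prod {Ω : Type*} [MeasureSpace Ω] [IsProbabilityMeasure (ℙ : Measure Ω)]
    {d : ℕ} {W : Fin d → Ω → ℝ}
    (hW : iIndepFun W ℙ) (hm : ∀ k, Measurable (W k))
    (s : Finset (Fin d)) (hint : ∀ k ∈ s, Integrable (W k) ℙ) :
    Integrable (fun ω => ∏ k ∈ s, W k ω) ℙ ∧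
      ∫ ω, ∏ k ∈ s, W k ω ∂ℙ = ∏ k ∈ s, ∫ ω, W k ω ∂ℙ := by
  classical
  induction s using Finset.induction with
  | empty => simp [integrable_const]
  | @insert i s hi ih =>
    have hprod := ih (fun k hk => hint k (mem_insert_of_mem hk))
    have hii : Integrable (W i) ℙ := hint i (mem_insert_self i s)
    have hind : IndepFun (∏ j ∈ s, W j) (W i) ℙ :=
      hW.indepFun_finsetProd_of_notMem hm hi
    have hps : (∏ j ∈ s, W j) = fun ω => ∏ j ∈ s, W j ω := by
      funext ω; simp
    have hprod' : Integrable (∏ j ∈ s, W j) ℙ := by rw [hps]; exact hprod.1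
    have hmul : Integrable ((∏ j ∈ s, W j) * W i) ℙ := hind.integrable_mul hprod' hii
    constructor
    · have : (fun ω => ∏ k ∈ insert i s, W k ω) = (∏ j ∈ s, W j) * W i := by
        funext ω; simp [Finset.prod_insert hi, mul_comm]
      rw [this]; exact hmul
    · have h1 : (fun ω => ∏ k ∈ insert i s, W k ω) = (∏ j ∈ s, W j) * W i := by
        funext ω; simp [Finset.prod_insert hi, mul_comm]
      rw [h1, hind.integral_mul_eq_mul_integral hprod'.aestronglyMeasurable hii.aestronglyMeasurable, Finset.prod_insert hi, ← hprod.2,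
        hps]
      simp [mul_comm]

/-- For the GD stick-breaking construction `X_i = V_i ∏_{k<i} (1-V_k)` with independent
`V_i ~ Beta(α_i, β_i)`, and `M_{i-1} = ∏_{k<i} (β_k+1)/(α_k+β_k+1)`, for `i < j`:
`Cov(X_i, X_j) = E(X_j) [ α_i/(α_i+β_i+1) · M_{i-1} - E(X_i) ]`. -/
theorem gd_covariance {Ω : Type*} [MeasureSpace Ω] [IsProbabilityMeasure (ℙ : Measure Ω)]
    (d : ℕ) (α β : Fin d → ℝ) (hα : ∀ i, 0 < α i) (hβ : ∀ i, 0 < β i)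
    (V : Fin d → Ω → ℝ) (hmeas : ∀ i, Measurable (V i))
    (hindep : iIndepFun V ℙ)
    (hdist : ∀ i, Measure.map (V i) ℙ = betaMeasureGD (α i) (β i))
    (X : Fin d → Ω → ℝ)
    (hX : ∀ i ω, X i ω = V i ω * ∏ k ∈ Finset.univ.filter (· < i), (1 - V k ω))
    (M : Fin d → ℝ)
    (hM : ∀ i, M i = ∏ k ∈ Finset.univ.filter (· < i), (β k + 1) / (α k + β k + 1)) :
    ∀ i j : Fin d, i < j →
      (∫ ω, X i ω * X j ω ∂ℙ) - (∫ ω, X i ω ∂ℙ) * (∫ ω, X j ω ∂ℙ) =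
        (∫ ω, X j ω ∂ℙ) *
          (α i / (α i + β i + 1) * M i - (∫ ω, X i ω ∂ℙ)) := by
  classical
  intro i j hij
  have key : ∀ (k : Fin d) (f : ℝ → ℝ), Measurable f →
      Integrable f (betaMeasureGD (α k) (β k)) →
      Integrable (fun ω => f (V k ω)) ℙ ∧
        ∫ ω, f (V k ω) ∂ℙ = ∫ x, f x ∂(betaMeasureGD (α k) (β k)) := by
    intro k f hf hint
    constructor
    · apply (integrable_map_measure hf.aestronglyMeasurable (hmeas k).aemeasurable).mp
      rw [hdist k]; exact hint
    · rw [← hdist k]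
      exact (integral_map (hmeas k).aemeasurable hf.aestronglyMeasurable).symm
  have master : ∀ (F : Fin d → ℝ → ℝ), (∀ k, Measurable (F k)) →
      (∀ k, Integrable (F k) (betaMeasureGD (α k) (β k))) → ∀ s : Finset (Fin d),
      ∫ ω, ∏ k ∈ s, F k (V k ω) ∂ℙ =
        ∏ k ∈ s, ∫ x, F k x ∂(betaMeasureGD (α k) (β k)) := by
    intro F hFm hFi s
    have hWind : iIndepFun (fun k => fun ω => F k (V k ω)) ℙ :=
      hindep.comp F hFm
    have h := iIndep_integral_prod hWind (fun k => (hFm k).comp (hmeas k)) s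
      (fun k _ => (key k (F k) (hFm k) (hFi k)).1)
    rw [h.2]
    exact Finset.prod_congr rfl fun k _ => (key k (F k) (hFm k) (hFi k)).2
  set Bf : Fin d → ℝ → ℝ := fun k x => if k = j then x else 1 - x with hBf
  set Gf : Fin d → ℝ → ℝ := fun k x =>
    if k = j then x else if k = i then x * (1 - x)
    else if k < i then (1 - x) * (1 - x) else 1 - x with hGf
  have hij' : i ≠ j := ne_of_lt hij
  have hBm : ∀ k, Measurable (Bf k) := by
    intro k
    show Measurable fun x : ℝ => if k = j then x else 1 - x
    split_ifs
    · exact measurable_id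
    · exact measurable_const.sub measurable_id
  have hGm : ∀ k, Measurable (Gf k) := by
    intro k
    show Measurable fun x : ℝ => if k = j then x else if k = i then x * (1 - x)
      else if k < i then (1 - x) * (1 - x) else 1 - x
    split_ifs
    · exact measurable_id
    · exact measurable_id.mul (measurable_const.sub measurable_id)
    · exact (measurable_const.sub measurable_id).mul (measurable_const.sub measurable_id)
    · exact measurable_const.sub measurable_id
  have hBi : ∀ k, Integrable (Bf k) (betaMeasureGD (α k) (β k)) := by
    intro k
    show Integrable (fun x : ℝ => if k = j then x else 1 - x) _
    split_ifs
    · exact (betaMoment_id _ _ (hα k) (hβ k)).1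
    · exact (betaMoment_one_sub _ _ (hα k) (hβ k)).1
  have hGi : ∀ k, Integrable (Gf k) (betaMeasureGD (α k) (β k)) := by
    intro k
    show Integrable (fun x : ℝ => if k = j then x else if k = i then x * (1 - x)
      else if k < i then (1 - x) * (1 - x) else 1 - x) _
    split_ifs
    · exact (betaMoment_id _ _ (hα k) (hβ k)).1
    · exact (betaMoment_mul _ _ (hα k) (hβ k)).1
    · exact (betaMoment_one_sub_sq _ _ (hα k) (hβ k)).1
    · exact (betaMoment_one_sub _ _ (hα k) (hβ k)).1
  have hjT : j ∉ Finset.univ.filter (· < j) := by simp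
  have hiT : i ∉ Finset.univ.filter (· < i) := by simp
  have hsub : insert i (Finset.univ.filter (· < i)) ⊆ Finset.univ.filter (· < j) := by
    intro k hk
    rcases Finset.mem_insert.mp hk with h | h
    · subst h; simp [hij]
    · have : k < i := by simpa using h
      simp [this.trans hij]
  have hiT' : i ∉ Finset.univ.filter (fun k => k < i) := by simp
  -- E[X j]
  have EXj : ∫ ω, X j ω ∂ℙ =
      (α j / (α j + β j)) * ∏ k ∈ Finset.univ.filter (· < j), (β k / (α k + β k)) := by
    have hfun : ∀ ω, X j ω = ∏ k ∈ insert j (Finset.univ.filter (· < j)), Bf k (V k ω) := by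
      intro ω
      rw [Finset.prod_insert hjT, hX j ω]
      congr 1
      · simp [hBf]
      · refine (Finset.prod_congr rfl fun k hk => ?_).symm
        have : k ≠ j := ne_of_lt (by simpa using (Finset.mem_filter.mp hk).2)
        simp [hBf, this]
    rw [show (fun ω => X j ω) = fun ω => ∏ k ∈ insert j (Finset.univ.filter (· < j)),
        Bf k (V k ω) from funext hfun,
      master Bf hBm hBi _, Finset.prod_insert hjT]
    congr 1
    · simp only [hBf, if_pos rfl]
      exact (betaMoment_id _ _ (hα j) (hβ j)).2
    · refine Finset.prod_congr rfl fun k hk => ?_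
      have hk' : k ≠ j := ne_of_lt (by simpa using (Finset.mem_filter.mp hk).2)
      simp only [hBf, if_neg hk']
      exact (betaMoment_one_sub _ _ (hα k) (hβ k)).2
  -- E[X i * X j]
  have EXiXj : ∫ ω, X i ω * X j ω ∂ℙ =
      ((α j / (α j + β j)) * ∏ k ∈ Finset.univ.filter (· < j), (β k / (α k + β k))) *
        (α i / (α i + β i + 1) * M i) := by
    have hfun : ∀ ω, X i ω * X j ω =
        ∏ k ∈ insert j (Finset.univ.filter (· < j)), Gf k (V k ω) := by
      intro ω
      rw [Finset.prod_insert hjT]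
      have hGj : Gf j (V j ω) = V j ω := by simp [hGf]
      have hsplit : ∀ k ∈ Finset.univ.filter (· < j), Gf k (V k ω) =
          (if k = i then V k ω else if k < i then 1 - V k ω else 1) * (1 - V k ω) := by
        intro k hk
        have hkj : k ≠ j := ne_of_lt (by simpa using (Finset.mem_filter.mp hk).2)
        by_cases h2 : k = i
        · simp [hGf, hkj, h2, hij']
        · by_cases h3 : k < i
          · simp [hGf, hkj, h2, h3]
          · simp [hGf, hkj, h2, h3]
      rw [Finset.prod_congr rfl hsplit, Finset.prod_mul_distrib]
      have hfirst : ∏ k ∈ Finset.univ.filter (· < j),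
          (if k = i then V k ω else if k < i then 1 - V k ω else 1) =
          V i ω * ∏ k ∈ Finset.univ.filter (· < i), (1 - V k ω) := by
        rw [← Finset.prod_subset hsub (fun k _ hk => by
          have h2 : k ≠ i := fun h => hk (by simp [h])
          have h3 : ¬ k < i := fun h => hk (by simp [h])
          simp [h2, h3]),
          Finset.prod_insert hiT, if_pos rfl]
        congr 1
        refine Finset.prod_congr rfl fun k hk => ?_
        have h3 : k < i := by simpa using (Finset.mem_filter.mp hk).2
        simp [ne_of_lt h3, h3]
      rw [hfirst, hGj, hX i ω, hX j ω]
      ring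
    rw [show (fun ω => X i ω * X j ω) = fun ω => ∏ k ∈ insert j (Finset.univ.filter (· < j)),
        Gf k (V k ω) from funext hfun,
      master Gf hGm hGi _, Finset.prod_insert hjT]
    have hGjval : ∫ x, Gf j x ∂(betaMeasureGD (α j) (β j)) = α j / (α j + β j) := by
      simp only [hGf, if_pos rfl]
      exact (betaMoment_id _ _ (hα j) (hβ j)).2
    have hGkval : ∀ k ∈ Finset.univ.filter (· < j),
        ∫ x, Gf k x ∂(betaMeasureGD (α k) (β k)) =
          (β k / (α k + β k)) *
            (if k = i then α i / (α i + β i + 1)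
              else if k < i then (β k + 1) / (α k + β k + 1) else 1) := by
      intro k hk
      have hkj : k ≠ j := ne_of_lt (by simpa using (Finset.mem_filter.mp hk).2)
      by_cases h2 : k = i
      · have hfe : Gf k = fun x : ℝ => x * (1 - x) := by
          funext x; simp [hGf, hkj, h2, hij']
        rw [hfe, (betaMoment_mul _ _ (hα k) (hβ k)).2, if_pos h2, h2, div_mul_div_comm]
        ring
      · by_cases h3 : k < i
        · have hfe : Gf k = fun x : ℝ => (1 - x) * (1 - x) := by
            funext x; simp [hGf, hkj, h2, h3]
          rw [hfe, (betaMoment_one_sub_sq _ _ (hα k) (hβ k)).2, if_neg h2, if_pos h3,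
            div_mul_div_comm]
        · have hfe : Gf k = fun x : ℝ => 1 - x := by
            funext x; simp [hGf, hkj, h2, h3]
          rw [hfe, (betaMoment_one_sub _ _ (hα k) (hβ k)).2, if_neg h2, if_neg h3, mul_one]
    rw [hGjval, Finset.prod_congr rfl hGkval, Finset.prod_mul_distrib]
    have hw : ∏ k ∈ Finset.univ.filter (· < j),
        (if k = i then α i / (α i + β i + 1)
          else if k < i then (β k + 1) / (α k + β k + 1) else 1) =
        α i / (α i + β i + 1) * M i := by
      rw [← Finset.prod_subset hsub (fun k _ hk => by
          have h2 : k ≠ i := fun h => hk (by simp [h])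
          have h3 : ¬ k < i := fun h => hk (by simp [h])
          simp [h2, h3]),
        Finset.prod_insert hiT, if_pos rfl, hM i]
      congr 1
      refine Finset.prod_congr rfl fun k hk => ?_
      have h3 : k < i := by simpa using (Finset.mem_filter.mp hk).2
      simp [ne_of_lt h3, h3]
    rw [hw]
    ring
  rw [EXiXj, EXj]
  ring
end

section
/- The Generalized Dirichlet distribution is conjugate to the multinomial: if $(p_1,\ldots,p_d, p_{d+1}) $ has $(p_1,\ldots,p_d) \sim GD(\alpha_1,\ldots,\alpha_d;\beta_1,\ldots,\beta_d)$ with $p_{d+1} = 1 - \sum_{j\le d} p_j$, and given $p$ the counts $(n_1,\ldots,n_{d+1})$ are multinomial, then the posterior of $(p_1,\ldots,p_d)$ is $GD(\alpha_1',\ldots,\alpha_d';\beta_1',\ldots,\beta_d')$ with $\alpha_j' = \alpha_j + n_j$ and $\beta_j' = \beta_j + n_{j+1} + n_{j+2} + \cdots + n_{d+1}$. -/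
open MeasureTheory ProbabilityTheory Finset

/-- The Beta function `B(a,b) = Γ(a)Γ(b)/Γ(a+b)`. -/
noncomputable def realBeta (a b : ℝ) : ℝ := Real.Gamma a * Real.Gamma b / Real.Gamma (a + b)

/-- The Generalized Dirichlet density `GD(a₁,…,a_d; b₁,…,b_d)` (here `d = n+1`). -/
noncomputable def gdDensity (n : ℕ) (a b : Fin (n + 1) → ℝ) (y : Fin (n + 1) → ℝ) : ℝ :=
  ∏ j : Fin (n + 1),
    (1 / realBeta (a j) (b j)) * y j ^ (a j - 1) *
      (1 - ∑ k ∈ Finset.Iic j, y k) ^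
        (if h : (j : ℕ) < n then
          b j - a ⟨j.1 + 1, by omega⟩ - b ⟨j.1 + 1, by omega⟩
        else b j - 1)

/-- The Generalized Dirichlet measure `GD(a;b)` on `Fin (n+1) → ℝ`. -/
noncomputable def gdMeasure (n : ℕ) (a b : Fin (n + 1) → ℝ) : Measure (Fin (n + 1) → ℝ) :=
  volume.withDensity fun y => ENNReal.ofReal
    ({y : Fin (n + 1) → ℝ | (∀ j, 0 < y j) ∧ ∑ j, y j < 1}.indicator (gdDensity n a b) y)

lemma realBeta_pos {a b : ℝ} (ha : 0 < a) (hb : 0 < b) : 0 < realBeta a b := by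
  unfold realBeta
  exact div_pos (mul_pos (Real.Gamma_pos_of_pos ha) (Real.Gamma_pos_of_pos hb))
    (Real.Gamma_pos_of_pos (by linarith))

lemma sum_Ioi_step {m : ℕ} (f : Fin m → ℝ) (a b : Fin m) (hab : (a : ℕ) + 1 = (b : ℕ)) :
    ∑ k ∈ Finset.Ioi a, f k = f b + ∑ k ∈ Finset.Ioi b, f k := by
  rw [show Finset.Ioi a = insert b (Finset.Ioi b) by
    ext k; simp only [Finset.mem_insert, Finset.mem_Ioi, Fin.lt_def, Fin.ext_iff]; omega]
  rw [Finset.sum_insert (by simp)]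

lemma gdDensity_measurable (n : ℕ) (a b : Fin (n + 1) → ℝ) : Measurable (gdDensity n a b) := by
  unfold gdDensity
  apply Finset.measurable_prod
  intro j _
  fun_prop

/-- Conjugacy of the Generalized Dirichlet prior to the multinomial likelihood: with
`(p₁,…,p_d) ~ GD(α;β)`, `p_{d+1} = 1 - ∑_{j≤d} p_j`, and multinomial counts
`(n₁,…,n_{d+1})`, the posterior (prior reweighted by the likelihood `∏ p_j^{n_j}`, up to a
positive finite normalizing constant) is `GD(α';β')` with `α'_j = α_j + n_j` and
`β'_j = β_j + n_{j+1} + ⋯ + n_{d+1}`. Here `d = n + 1`. -/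
theorem gd_multinomial_conjugacy (n : ℕ) (α β : Fin (n + 1) → ℝ)
    (hα : ∀ j, 0 < α j) (hβ : ∀ j, 0 < β j) (N : Fin (n + 2) → ℕ) :
    ∃ Z : ENNReal, 0 < Z ∧ Z < ⊤ ∧
      (gdMeasure n α β).withDensity
          (fun p => ENNReal.ofReal (∏ j : Fin (n + 2), (Fin.snoc p (1 - ∑ i, p i) : Fin (n + 2) → ℝ) j ^ N j)) =
        Z • gdMeasure n (fun j => α j + N j.castSucc)
          (fun j => β j + ∑ k ∈ Finset.Ioi j.castSucc, (N k : ℝ)) := by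
  classical
  set α' : Fin (n + 1) → ℝ := fun j => α j + N j.castSucc with hα'def
  set β' : Fin (n + 1) → ℝ := fun j => β j + ∑ k ∈ Finset.Ioi j.castSucc, (N k : ℝ) with hβ'def
  have hα' : ∀ j, 0 < α' j := fun j => add_pos_of_pos_of_nonneg (hα j) (Nat.cast_nonneg _)
  have hβ' : ∀ j, 0 < β' j := fun j =>
    add_pos_of_pos_of_nonneg (hβ j) (Finset.sum_nonneg fun k _ => Nat.cast_nonneg _)
  set C : ℝ := ∏ j : Fin (n + 1), realBeta (α' j) (β' j) / realBeta (α j) (β j) with hC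
  have hCpos : 0 < C := Finset.prod_pos fun j _ =>
    div_pos (realBeta_pos (hα' j) (hβ' j)) (realBeta_pos (hα j) (hβ j))
  refine ⟨ENNReal.ofReal C, by simpa using hCpos, ENNReal.ofReal_lt_top, ?_⟩
  set S : Set (Fin (n + 1) → ℝ) := {y | (∀ j, 0 < y j) ∧ ∑ j, y j < 1} with hS
  have hSmeas : MeasurableSet S := by
    have h1 : MeasurableSet {y : Fin (n + 1) → ℝ | ∀ j, 0 < y j} := by
      rw [Set.setOf_forall]
      exact MeasurableSet.iInter fun j =>
        measurableSet_lt measurable_const (measurable_pi_apply j)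
    have h2 : MeasurableSet {y : Fin (n + 1) → ℝ | ∑ j, y j < 1} :=
      measurableSet_lt (Finset.measurable_sum _ fun k _ => measurable_pi_apply k)
        measurable_const
    exact h1.inter h2
  set L : (Fin (n + 1) → ℝ) → ℝ :=
    fun p => ∏ j : Fin (n + 2), (Fin.snoc p (1 - ∑ i, p i) : Fin (n + 2) → ℝ) j ^ N j with hL
  have hLcont : Continuous L := by
    apply continuous_finset_prod
    intro j _
    apply Continuous.pow
    induction j using Fin.lastCases with
    | last =>
        simp only [Fin.snoc_last]
        exact continuous_const.sub (continuous_finset_sum _ fun i _ => continuous_apply i)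
    | cast i =>
        simp only [Fin.snoc_castSucc]
        exact continuous_apply i
  have hg : Measurable fun y => ENNReal.ofReal (S.indicator (gdDensity n α β) y) :=
    (Measurable.indicator (gdDensity_measurable n α β) hSmeas).ennreal_ofReal
  have hg' : Measurable fun y => ENNReal.ofReal (S.indicator (gdDensity n α' β') y) :=
    (Measurable.indicator (gdDensity_measurable n α' β') hSmeas).ennreal_ofReal
  have hf : Measurable fun p => ENNReal.ofReal (L p) := hLcont.measurable.ennreal_ofReal
  -- key pointwise identity
  have key : ∀ y, ENNReal.ofReal (S.indicator (gdDensity n α β) y) * ENNReal.ofReal (L y)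
      = ENNReal.ofReal C * ENNReal.ofReal (S.indicator (gdDensity n α' β') y) := by
    intro y
    by_cases hy : y ∈ S
    · have hymem := hy
      obtain ⟨hy1, hy2⟩ := hymem
      have hT : ∀ j : Fin (n + 1), 0 < 1 - ∑ k ∈ Finset.Iic j, y k := by
        intro j
        have h1 : ∑ k ∈ Finset.Iic j, y k ≤ ∑ k, y k :=
          Finset.sum_le_sum_of_subset_of_nonneg (Finset.subset_univ _)
            (fun k _ _ => (hy1 k).le)
        linarith
      rw [Set.indicator_of_mem hy, Set.indicator_of_mem hy]
      rw [← ENNReal.ofReal_mul (by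
        unfold gdDensity
        apply Finset.prod_nonneg
        intro j _
        have h1 := hT j
        have h2 := hy1 j
        have h3 := realBeta_pos (hα j) (hβ j)
        positivity)]
      rw [← ENNReal.ofReal_mul hCpos.le]
      congr 1
      -- the real identity
      unfold gdDensity
      simp only [hL]
      rw [Fin.prod_univ_castSucc
        (f := fun j => (Fin.snoc y (1 - ∑ i, y i) : Fin (n + 2) → ℝ) j ^ N j)]
      simp only [Fin.snoc_castSucc, Fin.snoc_last]
      rw [hC]
      rw [← Finset.prod_mul_distrib, ← mul_assoc, ← Finset.prod_mul_distrib]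
      rw [show ((1:ℝ) - ∑ i, y i) ^ N (Fin.last (n+1))
          = ∏ j : Fin (n+1), (if j = Fin.last n then ((1:ℝ) - ∑ i, y i) ^ N (Fin.last (n+1)) else 1) by
        rw [Finset.prod_ite_eq' Finset.univ (Fin.last n)
          (fun _ => ((1:ℝ) - ∑ i, y i) ^ N (Fin.last (n+1)))]
        simp]
      rw [← Finset.prod_mul_distrib]
      apply Finset.prod_congr rfl
      intro j _
      have hyj := hy1 j
      have hTj := hT j
      have hBne : realBeta (α j) (β j) ≠ 0 := (realBeta_pos (hα j) (hβ j)).ne'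
      have hB'ne : realBeta (α' j) (β' j) ≠ 0 := (realBeta_pos (hα' j) (hβ' j)).ne'
      have hpowy : y j ^ (α j - 1) * (y j : ℝ) ^ N j.castSucc = y j ^ (α' j - 1) := by
        rw [← Real.rpow_natCast (y j) (N j.castSucc), ← Real.rpow_add hyj]
        congr 1
        simp only [hα'def]
        ring
      by_cases hj : (j : ℕ) < n
      · have hjne : j ≠ Fin.last n := by
          intro h
          rw [h] at hj
          simp at hj
        rw [dif_pos hj, dif_pos hj, if_neg hjne]
        have hexp : β' j - α' ⟨j.1 + 1, by omega⟩ - β' ⟨j.1 + 1, by omega⟩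
            = β j - α ⟨j.1 + 1, by omega⟩ - β ⟨j.1 + 1, by omega⟩ := by
          simp only [hα'def, hβ'def]
          rw [sum_Ioi_step (fun k => (N k : ℝ)) j.castSucc
            ((⟨j.1 + 1, by omega⟩ : Fin (n+1)).castSucc) (by simp)]
          ring
        rw [hexp, ← hpowy]
        field_simp
      · have hjl : j = Fin.last n := by
          have := j.isLt
          apply Fin.ext
          simp only [Fin.val_last]
          omega
        subst hjl
        rw [dif_neg hj, dif_neg hj, if_pos rfl]
        have hIoi : Finset.Ioi ((Fin.last n).castSucc) = {Fin.last (n+1)} := by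
          ext k
          simp only [Finset.mem_Ioi, Finset.mem_singleton, Fin.lt_def, Fin.ext_iff,
            Fin.coe_castSucc, Fin.val_last]
          have := k.isLt
          omega
        have hexp : β' (Fin.last n) - 1 = (β (Fin.last n) - 1) + (N (Fin.last (n+1)) : ℝ) := by
          simp only [hβ'def, hIoi, Finset.sum_singleton]
          ring
        have hiic : ∑ k ∈ Finset.Iic (Fin.last n), y k = ∑ i, y i := by
          apply Finset.sum_congr _ fun _ _ => rfl
          ext k
          simp [Fin.le_last]
        have hpowT : (1 - ∑ k ∈ Finset.Iic (Fin.last n), y k) ^ (β' (Fin.last n) - 1)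
            = (1 - ∑ k ∈ Finset.Iic (Fin.last n), y k) ^ (β (Fin.last n) - 1)
              * ((1:ℝ) - ∑ i, y i) ^ N (Fin.last (n+1)) := by
          rw [hexp, Real.rpow_add (hT (Fin.last n)), hiic,
            Real.rpow_natCast]
        rw [hpowT, ← hpowy]
        field_simp
    · rw [Set.indicator_of_notMem hy, Set.indicator_of_notMem hy]
      simp
  have main : (volume.withDensity
        (fun y => ENNReal.ofReal (S.indicator (gdDensity n α β) y))).withDensity
        (fun p => ENNReal.ofReal (L p))
      = ENNReal.ofReal C • volume.withDensity
        (fun y => ENNReal.ofReal (S.indicator (gdDensity n α' β') y)) := by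
    rw [← withDensity_mul _ hg hf, ← withDensity_smul _ hg']
    congr 1
    funext y
    exact key y
  exact main
end
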